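/- arXiv:1610.08816 — 3 statements merged into one kernel-verified Lean document; each statement's English description precedes it below -/
import Mathlib

section
/- Let Γ be a connected threshold graph with string 0^{s₁}1^{t₁}⋯0^{s_k}1^{t_k} and s = Σsᵢ. Then 0 is an eigenvalue of the normalized adjacency matrix 𝒜 with multiplicity at least s − k; explicitly, for each i with sᵢ ≥ 2 there are sᵢ − 1 linearly independent eigenvectors supported on the cell of isolated-type vertices at stage i. -/
open Matrix Polynomial BigOperators Finset

def thresholdGraph (n : ℕ) (b : Fin n → Bool) : SimpleGraph (Fin n) where
  Adj i j := i ≠ j ∧ b (max i j) = true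
  symm := ⟨fun i j h => ⟨h.1.symm, by rw [max_comm]; exact h.2⟩⟩
  loopless := ⟨fun i h => h.1 rfl⟩

instance (n : ℕ) (b : Fin n → Bool) : DecidableRel (thresholdGraph n b).Adj :=
  fun i j => inferInstanceAs (Decidable (i ≠ j ∧ b (max i j) = true))

noncomputable def NA {n : ℕ} (G : SimpleGraph (Fin n)) [DecidableRel G.Adj] :
    Matrix (Fin n) (Fin n) ℝ :=
  (Matrix.diagonal fun i => ((G.degree i : ℝ))⁻¹) * G.adjMatrix ℝ

def cum (s t : ℕ → ℕ) (i : ℕ) : ℕ := ∑ j ∈ Finset.range i, (s j + t j)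

def isOne (k : ℕ) (s t : ℕ → ℕ) (p : ℕ) : Bool :=
  decide (∃ i < k, cum s t i + s i ≤ p ∧ p < cum s t i + s i + t i)

def TG (k : ℕ) (s t : ℕ → ℕ) : SimpleGraph (Fin (cum s t k)) :=
  thresholdGraph _ (fun p => isOne k s t p.val)

instance (k : ℕ) (s t : ℕ → ℕ) : DecidableRel (TG k s t).Adj :=
  inferInstanceAs (DecidableRel (thresholdGraph _ _).Adj)

/-!
Two vertices `a, b` with the same neighbourhood give a null vector `e_a - e_b` of the adjacency
matrix, hence of `D⁻¹A`. All vertices of the `0`-cell of stage `i` have as neighbours exactly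
the `1`-vertices added after that cell, so fixing the first vertex of each cell as an anchor
gives `sᵢ - 1` null vectors per cell, linearly independent because each one is detected by the
coordinate of its non-anchor vertex. Geometric multiplicity bounds algebraic multiplicity.
-/

theorem Matrix.finrank_ker_toLin'_le_count_roots_charpoly {K n : Type*} [Field K] [DecidableEq K]
    [Fintype n] [DecidableEq n] (M : Matrix n n K) :
    Module.finrank K (LinearMap.ker M.toLin') ≤ M.charpoly.roots.count 0 := by
  rw [← Module.End.eigenspace_zero, count_roots, ← charpoly_toLin']
  exact LinearMap.finrank_eigenspace_le _ _

theorem linearIndependent_single_sub_single {ι V R : Type*} [DecidableEq V] [Ring R]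
    [Nontrivial R] {a b : ι → V} (hb : Function.Injective b) (hab : ∀ x y, b x ≠ a y) :
    LinearIndependent R fun x => (Pi.single (a x) 1 - Pi.single (b x) 1 : V → R) := by
  classical
  rw [linearIndependent_iff']
  intro u c hc x hx
  simpa [Pi.single_apply, hab, hb.eq_iff, hx] using congrFun hc (b x)

theorem SimpleGraph.adjMatrix_mulVec_single_sub_single {V R : Type*} [Fintype V] [DecidableEq V]
    [NonAssocRing R] (G : SimpleGraph V) [DecidableRel G.Adj] {a b : V}
    (h : ∀ r, G.Adj r a ↔ G.Adj r b) :
    G.adjMatrix R *ᵥ (Pi.single a 1 - Pi.single b 1) = 0 := by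
  ext r
  simp [h r]

theorem NA_mulVec_eq_zero {n : ℕ} (G : SimpleGraph (Fin n)) [DecidableRel G.Adj]
    {v : Fin n → ℝ} (hv : G.adjMatrix ℝ *ᵥ v = 0) : NA G *ᵥ v = 0 := by
  rw [NA, ← mulVec_mulVec, hv, mulVec_zero]

theorem thresholdGraph_adj_iff {n : ℕ} {b : Fin n → Bool} {x : Fin n} {hi : ℕ}
    (hb : ∀ p : Fin n, x ≤ p → (p : ℕ) < hi → b p = false) (hx : (x : ℕ) < hi)
    (r : Fin n) :
    (thresholdGraph n b).Adj r x ↔ hi ≤ r ∧ b r = true := by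
  change r ≠ x ∧ b (max r x) = true ↔ _
  constructor
  · rintro ⟨-, hr⟩
    rcases le_or_gt r x with hrx | hxr
    · rw [max_eq_right hrx, hb x le_rfl hx] at hr
      exact (Bool.false_ne_true hr).elim
    · rw [max_eq_left hxr.le] at hr
      refine ⟨not_lt.1 fun hri => ?_, hr⟩
      rw [hb r hxr.le hri] at hr
      exact Bool.false_ne_true hr
  · rintro ⟨hir, hr⟩
    have hxr : x < r := Fin.lt_def.2 (hx.trans_le hir)
    exact ⟨hxr.ne', by rwa [max_eq_left hxr.le]⟩

theorem cum_add_le_of_lt (s t : ℕ → ℕ) {i j : ℕ} (h : i < j) :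
    cum s t i + (s i + t i) ≤ cum s t j := by
  rw [cum, ← Finset.sum_range_succ]
  exact Finset.sum_le_sum_of_subset (Finset.range_subset_range.2 h)

namespace ThresholdCell

variable (s t : ℕ → ℕ) {k : ℕ}

theorem cum_add_inj {i i' j j' : ℕ} (hj : j < s i + t i) (hj' : j' < s i' + t i')
    (h : cum s t i + j = cum s t i' + j') : i = i' ∧ j = j' := by
  rcases lt_trichotomy i i' with hii | rfl | hii
  · have := cum_add_le_of_lt s t hii
    omega
  · omega
  · have := cum_add_le_of_lt s t hii
    omega

variable {s t}

theorem isOne_eq_false_of_mem_cell {i p : ℕ} (hp : cum s t i ≤ p) (hp' : p < cum s t i + s i) :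
    isOne k s t p = false := by
  rw [isOne, decide_eq_false_iff_not]
  rintro ⟨i', -, hp₁, hp₂⟩
  obtain ⟨rfl, -⟩ := cum_add_inj s t (i := i) (i' := i') (j := p - cum s t i)
    (j' := p - cum s t i') (by omega) (by omega) (by omega)
  omega

theorem TG_adj_iff_of_mem_cell {i : ℕ} {x : Fin (cum s t k)} (hx : cum s t i ≤ x)
    (hx' : (x : ℕ) < cum s t i + s i) (r : Fin (cum s t k)) :
    (TG k s t).Adj r x ↔ cum s t i + s i ≤ r ∧ isOne k s t r = true :=
  thresholdGraph_adj_iff (fun _ hxp hp => isOne_eq_false_of_mem_cell (hx.trans hxp) hp) hx' r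

theorem cum_add_lt {i j : ℕ} (hi : i < k) (hj : j < s i) : cum s t i + j < cum s t k := by
  have := cum_add_le_of_lt s t hi
  omega

variable (s t)

def cellVertex {i : ℕ} (hi : i < k) (j : ℕ) (hj : j < s i) : Fin (cum s t k) :=
  ⟨cum s t i + j, cum_add_lt hi hj⟩

noncomputable def cellNullVec {i : ℕ} (hi : i < k) (j : Fin (s i - 1)) :
    Fin (cum s t k) → ℝ :=
  Pi.single (cellVertex s t hi 0 (by have := j.isLt; omega)) 1 -
    Pi.single (cellVertex s t hi (j + 1) (by have := j.isLt; omega)) 1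

variable {s t}

theorem NA_mulVec_cellNullVec {i : ℕ} (hi : i < k) (j : Fin (s i - 1)) :
    NA (TG k s t) *ᵥ cellNullVec s t hi j = 0 := by
  have := j.isLt
  refine NA_mulVec_eq_zero _ (SimpleGraph.adjMatrix_mulVec_single_sub_single _ fun r => ?_)
  rw [TG_adj_iff_of_mem_cell (i := i), TG_adj_iff_of_mem_cell (i := i)] <;>
    simp only [cellVertex] <;> omega

theorem cellNullVec_apply_of_notMem {i : ℕ} (hi : i < k) (j : Fin (s i - 1))
    {p : Fin (cum s t k)} (hp : p < cum s t i ∨ cum s t i + s i ≤ p) :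
    cellNullVec s t hi j p = 0 := by
  have := j.isLt
  have h₀ : p ≠ cellVertex s t hi 0 (by omega) := by
    simp only [Ne, Fin.ext_iff, cellVertex]
    omega
  have h₁ : p ≠ cellVertex s t hi (j + 1) (by omega) := by
    simp only [Ne, Fin.ext_iff, cellVertex]
    omega
  simp [cellNullVec, h₀, h₁]

theorem linearIndependent_cellNullVec {i : ℕ} (hi : i < k) :
    LinearIndependent ℝ (cellNullVec s t hi) := by
  refine linearIndependent_single_sub_single (fun j j' h => ?_) (fun j j' h => ?_) <;>
    simp only [cellVertex, Fin.mk.injEq] at h <;> omega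

theorem linearIndependent_cellNullVec_sigma :
    LinearIndependent ℝ fun x : (i : Fin k) × Fin (s i - 1) => cellNullVec s t x.1.isLt x.2 := by
  refine linearIndependent_single_sub_single (fun ⟨i, j⟩ ⟨i', j'⟩ h => ?_)
    fun ⟨i, j⟩ ⟨i', j'⟩ h => ?_
  · have := j.isLt
    have := j'.isLt
    simp only [cellVertex, Fin.mk.injEq] at h
    obtain ⟨hii, hjj⟩ := cum_add_inj s t (by omega) (by omega) h
    obtain rfl := Fin.ext hii
    obtain rfl := Fin.ext (Nat.succ_injective hjj)
    rfl
  · have := j.isLt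
    have := j'.isLt
    simp only [cellVertex, Fin.mk.injEq] at h
    have := (cum_add_inj s t (by omega) (by omega) h).2
    omega

end ThresholdCell

theorem Fintype.card_sigma_fin_sub_one {k : ℕ} {s : ℕ → ℕ} (hs : ∀ i < k, 1 ≤ s i) :
    Fintype.card ((i : Fin k) × Fin (s i - 1)) = (∑ i ∈ range k, s i) - k := by
  rw [Fintype.card_sigma]
  simp only [Fintype.card_fin]
  rw [Fin.sum_univ_eq_sum_range (fun i => s i - 1),
    sum_tsub_distrib _ fun i hi => hs i (mem_range.1 hi)]
  simp

open ThresholdCell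

theorem threshold_zero_multiplicity_general (k : ℕ) (s t : ℕ → ℕ)
    (hs : ∀ i < k, 1 ≤ s i) :
    let M := NA (TG k s t)
    (∑ i ∈ Finset.range k, s i) - k ≤ M.charpoly.roots.count 0 ∧
    ∀ i < k, 2 ≤ s i →
      ∃ f : Fin (s i - 1) → (Fin (cum s t k) → ℝ),
        LinearIndependent ℝ f ∧
        ∀ j, M.mulVec (f j) = 0 ∧
          ∀ p : Fin (cum s t k),
            (p.val < cum s t i ∨ cum s t i + s i ≤ p.val) → f j p = 0 := by
  intro M
  refine ⟨?_, fun i hi _ => ⟨cellNullVec s t hi, linearIndependent_cellNullVec hi,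
    fun j => ⟨NA_mulVec_cellNullVec hi j, fun _ => cellNullVec_apply_of_notMem hi j⟩⟩⟩
  let v := fun x : (i : Fin k) × Fin (s i - 1) => cellNullVec s t x.1.isLt x.2
  have hker : Submodule.span ℝ (Set.range v) ≤ LinearMap.ker M.toLin' :=
    Submodule.span_le.2 <| Set.range_subset_iff.2 fun x => NA_mulVec_cellNullVec x.1.isLt x.2
  calc (∑ i ∈ range k, s i) - k = Module.finrank ℝ (Submodule.span ℝ (Set.range v)) := by
        rw [finrank_span_eq_card linearIndependent_cellNullVec_sigma,
          Fintype.card_sigma_fin_sub_one hs]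
    _ ≤ Module.finrank ℝ (LinearMap.ker M.toLin') := Submodule.finrank_mono hker
    _ ≤ M.charpoly.roots.count 0 := M.finrank_ker_toLin'_le_count_roots_charpoly

/-- For a connected threshold graph `0^{s₁}1^{t₁}⋯0^{s_k}1^{t_k}`
with `s = Σsᵢ`, the eigenvalue `0` of the normalized adjacency matrix has
multiplicity at least `s - k`; explicitly, for each `i` with `sᵢ ≥ 2` there are
`sᵢ - 1` linearly independent null eigenvectors supported on the cell of
isolated-type vertices added at stage `i` (positions `[cum i, cum i + sᵢ)`). -/
theorem threshold_zero_multiplicity (k : ℕ) (s t : ℕ → ℕ) (hk : 1 ≤ k)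
    (hs : ∀ i < k, 1 ≤ s i) (ht : ∀ i < k, 1 ≤ t i) :
    let M := NA (TG k s t)
    (∑ i ∈ Finset.range k, s i) - k ≤ M.charpoly.roots.count 0 ∧
    ∀ i < k, 2 ≤ s i →
      ∃ f : Fin (s i - 1) → (Fin (cum s t k) → ℝ),
        LinearIndependent ℝ f ∧
        ∀ j, M.mulVec (f j) = 0 ∧
          ∀ p : Fin (cum s t k),
            (p.val < cum s t i ∨ cum s t i + s i ≤ p.val) → f j p = 0 :=
  threshold_zero_multiplicity_general k s t hs
end

section
/- Let Γ be a connected threshold graph on n vertices with string 0^{s₁}1^{t₁}⋯0^{s_k}1^{t_k} and let λ₁ be the smallest eigenvalue of its normalized adjacency matrix. Then −(n − t_k)/(n − 1) ≤ λ₁ ≤ −1/(t + s₁ − 1), where t = Σtᵢ. -/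
open Matrix Polynomial BigOperators Finset

/-!
`D⁻¹A` is row-stochastic, and conjugating it by `D^{1/2}` gives the symmetric matrix
`D^{-1/2} A D^{-1/2}`.

Lower bound (a Dobrushin-type estimate): if any two rows of a row-stochastic matrix `P` satisfy
`∑ⱼ min (P a j) (P b j) ≥ γ`, comparing the eigenvalue equation at a maximum and at a minimum
of the eigenvector shows that every eigenvalue is at least `γ - 1`. The last block of `t_k`
vertices is joined to all other vertices, so any two vertices have at least `t_k - 1` common
neighbours, each contributing an entry `≥ 1/(n - 1)` to both rows.

Upper bound: by symmetry of `D^{-1/2} A D^{-1/2}`, the smallest eigenvalue is at most the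
generalized Rayleigh quotient `xᵀAx / xᵀDx`, which equals `-2/(d_u + d_w)` for `x = e_u - e_w`
along an edge `uw`. For the first vertex `u` and the first dominating vertex `w`,
`d_u ≤ t` and `d_w ≤ s₁ + t - 1`.
-/

theorem Matrix.mem_spectrum_iff_exists_mulVec_eq_smul {K ι : Type*} [Field K] [Fintype ι]
    [DecidableEq ι] {M : Matrix ι ι K} {μ : K} :
    μ ∈ spectrum K M ↔ ∃ v : ι → K, v ≠ 0 ∧ M *ᵥ v = μ • v := by
  rw [← spectrum_toLin', ← Module.End.hasEigenvalue_iff_mem_spectrum]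
  constructor
  · intro h
    obtain ⟨v, hv⟩ := h.exists_hasEigenvector
    exact ⟨v, hv.2, by simpa using hv.apply_eq_smul⟩
  · rintro ⟨v, hv, hMv⟩
    exact Module.End.hasEigenvalue_of_hasEigenvector
      ⟨by simpa [Module.End.mem_eigenspace_iff] using hMv, hv⟩

theorem LinearMap.IsSymmetric.exists_hasEigenvalue_le_rayleigh {𝕜 E : Type*} [RCLike 𝕜]
    [NormedAddCommGroup E] [InnerProductSpace 𝕜 E] [FiniteDimensional 𝕜 E]
    {T : E →ₗ[𝕜] E} (hT : T.IsSymmetric) {x : E} (hx : x ≠ 0) :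
    ∃ μ : ℝ, Module.End.HasEigenvalue T (μ : 𝕜) ∧
      μ ≤ RCLike.re (inner 𝕜 (T x) x) / ‖x‖ ^ 2 := by
  have : Nontrivial E := ⟨⟨x, 0, hx⟩⟩
  refine ⟨_, hT.hasEigenvalue_iInf_of_finiteDimensional,
    ciInf_le ?_ (⟨x, hx⟩ : {x : E // x ≠ 0})⟩
  refine ⟨-‖LinearMap.toContinuousLinearMap T‖, Set.forall_mem_range.2 fun y => ?_⟩
  exact (abs_le.1 ((LinearMap.toContinuousLinearMap T).rayleighQuotient_le_norm y)).1

theorem Matrix.IsHermitian.exists_mem_spectrum_mul_dotProduct_le {ι : Type*} [Fintype ι]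
    [DecidableEq ι] {S : Matrix ι ι ℝ} (hS : S.IsHermitian) {x : ι → ℝ} (hx : x ≠ 0) :
    ∃ μ ∈ spectrum ℝ S, μ * (x ⬝ᵥ x) ≤ S *ᵥ x ⬝ᵥ x := by
  obtain ⟨μ, hμ, hle⟩ :=
    (isSymmetric_toEuclideanLin_iff.2 hS).exists_hasEigenvalue_le_rayleigh
      (x := WithLp.toLp 2 x) (by simpa using hx)
  refine ⟨μ, ?_, ?_⟩
  · rw [← spectrum_toLpLin 2]
    exact Module.End.hasEigenvalue_iff_mem_spectrum.1 hμ
  · have hinner : RCLike.re (inner ℝ (S.toEuclideanLin (WithLp.toLp 2 x)) (WithLp.toLp 2 x))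
        = S *ᵥ x ⬝ᵥ x := by
      simp [EuclideanSpace.inner_eq_star_dotProduct, dotProduct_comm]
    have hnorm : ‖WithLp.toLp 2 x‖ ^ 2 = x ⬝ᵥ x := by
      rw [← real_inner_self_eq_norm_sq, EuclideanSpace.inner_eq_star_dotProduct]
      simp
    have hpos : 0 < x ⬝ᵥ x := by
      rw [← hnorm]; exact pow_pos (norm_pos_iff.2 (by simpa using hx)) 2
    rwa [hinner, hnorm, le_div_iff₀ hpos] at hle

theorem Matrix.exists_mem_spectrum_diagonal_inv_mul_le {ι : Type*} [Fintype ι]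
    [DecidableEq ι] {A : Matrix ι ι ℝ} (hA : A.IsHermitian) {d : ι → ℝ} (hd : ∀ i, 0 < d i)
    {x : ι → ℝ} (hx : x ≠ 0) :
    ∃ μ ∈ spectrum ℝ (diagonal (fun i => (d i)⁻¹) * A),
      μ * ∑ i, d i * x i ^ 2 ≤ A *ᵥ x ⬝ᵥ x := by
  set r : ι → ℝ := fun i => √(d i)
  have hr : ∀ i, r i ≠ 0 := fun i => (Real.sqrt_pos.2 (hd i)).ne'
  have hrr : ∀ i, r i * r i = d i := fun i => Real.mul_self_sqrt (hd i).le
  have hinv : diagonal r⁻¹ * diagonal r = 1 := by simp [hr]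
  have hsq : diagonal r⁻¹ * diagonal r⁻¹ = diagonal (fun i => (d i)⁻¹) := by
    simp [← hrr]
  let u : (Matrix ι ι ℝ)ˣ := ⟨diagonal r⁻¹, diagonal r, hinv, by simp [hr]⟩
  set S := diagonal r⁻¹ * A * diagonal r⁻¹
  have hS : S.IsHermitian := by
    simpa using isHermitian_conjTranspose_mul_mul (diagonal r⁻¹) hA
  have hconj : (u : Matrix ι ι ℝ) * S * ((u⁻¹ : (Matrix ι ι ℝ)ˣ) : Matrix ι ι ℝ)
      = diagonal (fun i => (d i)⁻¹) * A := by
    simp only [u, S, Units.inv_mk, mul_assoc]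
    rw [hinv, mul_one, ← mul_assoc, hsq]
  have hy : diagonal r *ᵥ x ≠ 0 := fun h =>
    hx (funext fun i => by simpa [mulVec_diagonal, hr i] using congrFun h i)
  obtain ⟨μ, hμ, hle⟩ := hS.exists_mem_spectrum_mul_dotProduct_le hy
  refine ⟨μ, by rwa [← hconj, spectrum.units_conjugate], ?_⟩
  have hden : diagonal r *ᵥ x ⬝ᵥ diagonal r *ᵥ x = ∑ i, d i * x i ^ 2 := by
    simp only [dotProduct, mulVec_diagonal, ← hrr]
    exact sum_congr rfl fun i _ => by ring
  have hnum : S *ᵥ diagonal r *ᵥ x ⬝ᵥ diagonal r *ᵥ x = A *ᵥ x ⬝ᵥ x := by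
    rw [show S *ᵥ diagonal r *ᵥ x = diagonal r⁻¹ *ᵥ A *ᵥ x by
      simp only [S, mulVec_mulVec, mul_assoc, hinv, mul_one]]
    simp only [dotProduct, mulVec_diagonal, Pi.inv_apply]
    exact sum_congr rfl fun i _ => by field_simp [hr i]
  rwa [hden, hnum] at hle

theorem sum_mul_sub_sum_mul_le_of_sum_eq_one {ι : Type*} [Fintype ι] {p q v : ι → ℝ}
    (hp : ∑ j, p j = 1) (hq : ∑ j, q j = 1) {lo hi : ℝ} (hlo : ∀ j, lo ≤ v j)
    (hhi : ∀ j, v j ≤ hi) :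
    ∑ j, p j * v j - ∑ j, q j * v j ≤ (1 - ∑ j, min (p j) (q j)) * (hi - lo) := by
  have hupper : ∑ j, (p j - min (p j) (q j)) * v j ≤ ∑ j, (p j - min (p j) (q j)) * hi :=
    sum_le_sum fun j _ => mul_le_mul_of_nonneg_left (hhi j) (sub_nonneg.2 (min_le_left _ _))
  have hlower : ∑ j, (q j - min (p j) (q j)) * lo ≤ ∑ j, (q j - min (p j) (q j)) * v j :=
    sum_le_sum fun j _ => mul_le_mul_of_nonneg_left (hlo j) (sub_nonneg.2 (min_le_right _ _))
  simp only [sub_mul, sum_sub_distrib, ← sum_mul, hp, hq] at hupper hlower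
  linarith

theorem Matrix.sub_one_le_of_mem_spectrum_of_le_sum_min {ι : Type*} [Fintype ι] [DecidableEq ι]
    {P : Matrix ι ι ℝ} (hrow : ∀ i, ∑ j, P i j = 1) {γ : ℝ}
    (hγ : ∀ a b, γ ≤ ∑ j, min (P a j) (P b j)) {μ : ℝ} (hμ : μ ∈ spectrum ℝ P) :
    γ - 1 ≤ μ := by
  obtain ⟨v, hv, hPv⟩ := mem_spectrum_iff_exists_mulVec_eq_smul.1 hμ
  have hev : ∀ i, ∑ j, P i j * v j = μ * v i := fun i => by
    simpa [mulVec, dotProduct] using congrFun hPv i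
  obtain ⟨i₀, -⟩ := Function.ne_iff.1 hv
  obtain ⟨a, -, ha⟩ := exists_max_image univ v ⟨i₀, mem_univ _⟩
  obtain ⟨b, -, hb⟩ := exists_min_image univ v ⟨i₀, mem_univ _⟩
  rcases (hb a (mem_univ _)).lt_or_eq with hlt | heq
  · have hspread := sum_mul_sub_sum_mul_le_of_sum_eq_one (hrow b) (hrow a)
      (fun j => hb j (mem_univ j)) (fun j => ha j (mem_univ j))
    rw [hev, hev] at hspread
    nlinarith [hγ b a]
  · have hconst : ∀ j, v j = v a := fun j =>
      le_antisymm (ha j (mem_univ j)) (heq ▸ hb j (mem_univ j))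
    have hva : v a ≠ 0 := fun h => hv (funext fun j => by rw [hconst j, h, Pi.zero_apply])
    have hμ1 : μ = 1 := by
      have := hev a
      simp only [hconst, ← sum_mul, hrow, one_mul] at this
      exact mul_right_cancel₀ hva (by rw [← this, one_mul])
    have hγ1 := hγ a a
    simp only [min_self, hrow] at hγ1
    linarith

namespace SimpleGraph

variable {V : Type*} [Fintype V] {G : SimpleGraph V} [DecidableRel G.Adj]

theorem degree_pos_of_forall_adj {u w : V} (hu : ∀ v, u ≠ v → G.Adj u v) (huw : u ≠ w)
    (i : V) : 0 < G.degree i := by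
  rw [degree_pos_iff_exists_adj]
  by_cases hi : i = u
  · exact ⟨w, hi ▸ hu w huw⟩
  · exact ⟨u, (hu i (Ne.symm hi)).symm⟩

theorem card_sub_one_le_card_inter_neighborFinset [DecidableEq V] {D : Finset V}
    (hD : ∀ u ∈ D, ∀ v, u ≠ v → G.Adj u v) (hDV : #D < Fintype.card V) (a b : V) :
    #D - 1 ≤ #(G.neighborFinset a ∩ G.neighborFinset b) := by
  by_cases hab : a ∈ D ∧ b ∈ D
  · have hsub : (univ.erase a).erase b ⊆ G.neighborFinset a ∩ G.neighborFinset b := by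
      intro j hj
      obtain ⟨hjb, hja, -⟩ := Finset.mem_erase.1 hj |>.imp_right Finset.mem_erase.1
      simp only [Finset.mem_inter, mem_neighborFinset]
      exact ⟨hD a hab.1 j (Ne.symm hja), hD b hab.2 j (Ne.symm hjb)⟩
    have := Finset.card_le_card hsub
    have := Finset.pred_card_le_card_erase (s := univ.erase a) (a := b)
    rw [Finset.card_erase_of_mem (mem_univ a), Finset.card_univ] at this
    omega
  · have hsub : (D.erase a).erase b ⊆ G.neighborFinset a ∩ G.neighborFinset b := by
      intro j hj
      obtain ⟨hjb, hja, hjD⟩ := Finset.mem_erase.1 hj |>.imp_right Finset.mem_erase.1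
      simp only [Finset.mem_inter, mem_neighborFinset]
      exact ⟨(hD j hjD a hja).symm, (hD j hjD b hjb).symm⟩
    have := Finset.card_le_card hsub
    rcases not_and_or.1 hab with ha | hb
    · rw [Finset.erase_eq_of_notMem ha] at this
      have := Finset.pred_card_le_card_erase (s := D) (a := b)
      omega
    · rw [Finset.erase_eq_of_notMem (fun h => hb (Finset.mem_of_mem_erase h))] at this
      have := Finset.pred_card_le_card_erase (s := D) (a := a)
      omega

end SimpleGraph

section NormalizedAdjacency

variable {n : ℕ} {G : SimpleGraph (Fin n)} [DecidableRel G.Adj]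

theorem NA_apply (i j : Fin n) : NA G i j = if G.Adj i j then ((G.degree i : ℝ))⁻¹ else 0 := by
  rw [NA, diagonal_mul, SimpleGraph.adjMatrix_apply, mul_ite, mul_one, mul_zero]

theorem sum_NA_apply {i : Fin n} (hi : 0 < G.degree i) : ∑ j, NA G i j = 1 := by
  simp only [NA_apply, sum_ite, sum_const_zero, add_zero, sum_const, nsmul_eq_mul,
    ← SimpleGraph.neighborFinset_eq_filter, SimpleGraph.card_neighborFinset_eq_degree]
  exact mul_inv_cancel₀ (by positivity)

theorem neg_div_le_of_mem_spectrum_NA {D : Finset (Fin n)}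
    (hD : ∀ u ∈ D, ∀ v, u ≠ v → G.Adj u v) (hD₀ : D.Nonempty) (hDn : #D < n) {μ : ℝ}
    (hμ : μ ∈ spectrum ℝ (NA G)) : -(((n : ℝ) - #D) / ((n : ℝ) - 1)) ≤ μ := by
  obtain ⟨u, hu⟩ := hD₀
  obtain ⟨w, hw⟩ : ∃ w, w ∉ D := by
    by_contra! h
    exact hDn.not_ge (by simpa using card_le_card (show univ ⊆ D from fun x _ => h x))
  have hdeg := SimpleGraph.degree_pos_of_forall_adj (w := w) (hD u hu)
    (by rintro rfl; exact hw hu)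
  have hn : (1 : ℝ) < n := by
    have := card_pos.2 ⟨u, hu⟩
    exact_mod_cast (by omega : 1 < n)
  have hentry : ∀ a j, G.Adj a j → ((n : ℝ) - 1)⁻¹ ≤ NA G a j := fun a j h => by
    rw [NA_apply, if_pos h]
    have := G.degree_lt_card_verts a
    rw [Fintype.card_fin] at this
    exact inv_anti₀ (by exact_mod_cast hdeg a) (by
      rw [le_sub_iff_add_le]; exact_mod_cast this)
  have hγ : ∀ a b, ((#D : ℝ) - 1) / ((n : ℝ) - 1) ≤ ∑ j, min (NA G a j) (NA G b j) := by
    intro a b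
    set C := G.neighborFinset a ∩ G.neighborFinset b
    have hC : (#D : ℝ) - 1 ≤ #C := by
      have := SimpleGraph.card_sub_one_le_card_inter_neighborFinset hD (by simpa using hDn) a b
      have : 1 ≤ #D := card_pos.2 ⟨u, hu⟩
      rw [← Nat.cast_one, ← Nat.cast_sub this]; exact_mod_cast ‹#D - 1 ≤ #C›
    calc ((#D : ℝ) - 1) / ((n : ℝ) - 1) ≤ ∑ _j ∈ C, ((n : ℝ) - 1)⁻¹ := by
          rw [sum_const, nsmul_eq_mul, div_eq_mul_inv]
          exact mul_le_mul_of_nonneg_right hC (by simp; linarith)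
      _ ≤ ∑ j ∈ C, min (NA G a j) (NA G b j) := sum_le_sum fun j hj => by
          simp only [C, mem_inter, SimpleGraph.mem_neighborFinset] at hj
          exact le_min (hentry a j hj.1) (hentry b j hj.2)
      _ ≤ ∑ j, min (NA G a j) (NA G b j) :=
          sum_le_sum_of_subset_of_nonneg (subset_univ C) fun j _ _ =>
            le_min (by rw [NA_apply]; split_ifs <;> positivity)
              (by rw [NA_apply]; split_ifs <;> positivity)
  have := sub_one_le_of_mem_spectrum_of_le_sum_min (fun i => sum_NA_apply (hdeg i)) hγ hμ
  have hn' : (n : ℝ) - 1 ≠ 0 := by linarith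
  convert this using 1
  field_simp
  ring

theorem exists_mem_spectrum_NA_mul_le_of_adj (hdeg : ∀ i, 0 < G.degree i) {u w : Fin n}
    (huw : G.Adj u w) :
    ∃ μ ∈ spectrum ℝ (NA G), μ * ((G.degree u : ℝ) + G.degree w) ≤ -2 := by
  set x : Fin n → ℝ := Pi.single u 1 - Pi.single w 1
  have hx : x ≠ 0 := fun h => by simpa [x, huw.ne] using congrFun h u
  obtain ⟨μ, hμ, hle⟩ := exists_mem_spectrum_diagonal_inv_mul_le (G.isHermitian_adjMatrix ℝ)
    (d := fun i => (G.degree i : ℝ)) (fun i => by exact_mod_cast hdeg i) hx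
  refine ⟨μ, hμ, ?_⟩
  have hden : ∑ i, (G.degree i : ℝ) * x i ^ 2 = G.degree u + G.degree w := by
    rw [Fintype.sum_eq_add u w huw.ne fun i hi => by simp [x, hi.1, hi.2]]
    simp [x, huw.ne, huw.ne.symm]
  have hnum : G.adjMatrix ℝ *ᵥ x ⬝ᵥ x = -2 := by
    simp [x, mulVec_sub, dotProduct_sub, huw, huw.symm]
    norm_num
  rwa [hden, hnum] at hle

end NormalizedAdjacency

theorem thresholdGraph_degree_le {n : ℕ} (b : Fin n → Bool) (p : Fin n) :
    (thresholdGraph n b).degree p ≤ p + #{q | p < q ∧ b q = true} := by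
  rw [← SimpleGraph.card_neighborFinset_eq_degree]
  calc #((thresholdGraph n b).neighborFinset p)
      ≤ #(Iio p ∪ ({q | p < q ∧ b q = true} : Finset (Fin n))) := by
        refine card_le_card fun q hq => ?_
        obtain ⟨hne, hmax⟩ := (SimpleGraph.mem_neighborFinset _ _ _).1 hq
        rcases lt_or_gt_of_ne hne with h | h
        · rw [max_eq_right h.le] at hmax
          simp [h, hmax]
        · simp [h]
    _ ≤ #(Iio p) + #{q | p < q ∧ b q = true} := card_union_le _ _
    _ = p + #{q | p < q ∧ b q = true} := by rw [Fin.card_Iio]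

theorem Fin.card_filter_le_val {n : ℕ} (c : ℕ) : #{i : Fin n | c ≤ (i : ℕ)} = n - c := by
  have h := card_filter_add_card_filter_not (s := (univ : Finset (Fin n)))
    (fun i : Fin n => (i : ℕ) < c)
  simp only [Fin.card_filter_val_lt, not_lt, card_univ, Fintype.card_fin] at h
  omega

section ThresholdGraph

variable {k : ℕ} {s t : ℕ → ℕ}

theorem cum_eq_of_one_le (hk : 1 ≤ k) :
    cum s t k = cum s t (k - 1) + s (k - 1) + t (k - 1) := by
  rw [cum, ← Nat.sub_add_cancel hk, sum_range_succ, Nat.add_sub_cancel, ← add_assoc]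
  rfl

theorem isOne_of_le (hk : 1 ≤ k) {p : ℕ} (hp : cum s t (k - 1) + s (k - 1) ≤ p)
    (hpn : p < cum s t k) : isOne k s t p = true := by
  rw [isOne, decide_eq_true_eq]
  exact ⟨k - 1, by omega, hp, by rw [cum_eq_of_one_le hk] at hpn; omega⟩

theorem isOne_s_zero (hk : 1 ≤ k) (ht : 1 ≤ t 0) : isOne k s t (s 0) = true := by
  rw [isOne, decide_eq_true_eq]
  exact ⟨0, hk, by simp [cum], by simp [cum]; omega⟩

theorem card_filter_isOne_le :
    #{q : Fin (cum s t k) | isOne k s t q = true} ≤ ∑ i ∈ range k, t i := by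
  calc #{q : Fin (cum s t k) | isOne k s t q = true}
      ≤ #((range k).biUnion fun i => Ico (cum s t i + s i) (cum s t i + s i + t i)) := by
        refine card_le_card_of_injOn Fin.val (fun q hq => ?_) Fin.val_injective.injOn
        obtain ⟨i, hi, hq⟩ := by simpa [isOne] using hq
        exact mem_biUnion.2 ⟨i, mem_range.2 hi, mem_Ico.2 hq⟩
    _ ≤ ∑ i ∈ range k, #(Ico (cum s t i + s i) (cum s t i + s i + t i)) := card_biUnion_le
    _ = ∑ i ∈ range k, t i := by simp

theorem TG_adj_of_le (hk : 1 ≤ k) {u : Fin (cum s t k)}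
    (hu : cum s t (k - 1) + s (k - 1) ≤ u) (v : Fin (cum s t k)) (huv : u ≠ v) :
    (TG k s t).Adj u v :=
  ⟨huv, isOne_of_le hk (hu.trans (Fin.le_def.1 (le_max_left u v))) (max u v).2⟩

theorem TG_degree_pos (hk : 1 ≤ k) (hs : 1 ≤ s (k - 1)) (ht : 1 ≤ t (k - 1))
    (i : Fin (cum s t k)) : 0 < (TG k s t).degree i := by
  have hn := cum_eq_of_one_le hk (s := s) (t := t)
  exact SimpleGraph.degree_pos_of_forall_adj (u := ⟨cum s t k - 1, by omega⟩)
    (w := ⟨0, by omega⟩) (TG_adj_of_le hk (by simp; omega)) (by simp [Fin.ext_iff]; omega) i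

theorem TG_neg_div_le_of_mem_spectrum (hk : 1 ≤ k) (hs : 1 ≤ s (k - 1)) (ht : 1 ≤ t (k - 1))
    {μ : ℝ} (hμ : μ ∈ spectrum ℝ (NA (TG k s t))) :
    -(((cum s t k : ℝ) - t (k - 1)) / ((cum s t k : ℝ) - 1)) ≤ μ := by
  have hn := cum_eq_of_one_le hk (s := s) (t := t)
  set D : Finset (Fin (cum s t k)) := {u | cum s t (k - 1) + s (k - 1) ≤ (u : ℕ)}
  have hD : #D = t (k - 1) := by rw [Fin.card_filter_le_val]; omega
  have := neg_div_le_of_mem_spectrum_NA (D := D)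
    (fun u hu => TG_adj_of_le hk (mem_filter.1 hu).2)
    ⟨⟨cum s t k - 1, by omega⟩, by simp [D]; omega⟩ (by omega) hμ
  rwa [hD] at this

theorem TG_exists_mem_spectrum_le (hk : 1 ≤ k) (hs : 1 ≤ s 0) (ht : 1 ≤ t 0)
    (hdeg : ∀ i, 0 < (TG k s t).degree i) :
    ∃ μ ∈ spectrum ℝ (NA (TG k s t)),
      μ ≤ -1 / (((∑ i ∈ range k, t i : ℕ) : ℝ) + (s 0 : ℝ) - 1) := by
  set tt := ∑ i ∈ range k, t i
  have hs0 : s 0 < cum s t k := by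
    have : cum s t 1 ≤ cum s t k := sum_le_sum_of_subset (range_subset_range.2 hk)
    simp [cum] at this ⊢
    omega
  set u : Fin (cum s t k) := ⟨0, by omega⟩
  set w : Fin (cum s t k) := ⟨s 0, hs0⟩
  have hadj : (TG k s t).Adj u w :=
    ⟨by simp [u, w, Fin.ext_iff]; omega, by simpa [u, w] using isOne_s_zero hk ht⟩
  have hones := card_filter_isOne_le (k := k) (s := s) (t := t)
  have hdu : (TG k s t).degree u ≤ tt := by
    refine (thresholdGraph_degree_le _ u).trans (le_trans ?_ hones)
    simpa [u] using card_le_card fun q hq => by simp at hq ⊢; exact hq.2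
  have hdw : (TG k s t).degree w + 1 ≤ s 0 + tt := by
    have hlt : #{q : Fin (cum s t k) | w < q ∧ isOne k s t q = true}
        < #{q : Fin (cum s t k) | isOne k s t q = true} := by
      refine card_lt_card ⟨fun q hq => by simp at hq ⊢; exact hq.2, fun h => ?_⟩
      have hw : w ∈ ({q | isOne k s t q = true} : Finset (Fin (cum s t k))) := by
        simpa [w] using isOne_s_zero (s := s) hk ht
      simpa using h hw
    have : (TG k s t).degree w ≤ s 0 + #{q | w < q ∧ isOne k s t q = true} :=
      thresholdGraph_degree_le _ w
    omega
  obtain ⟨μ, hμ, hle⟩ := exists_mem_spectrum_NA_mul_le_of_adj hdeg hadj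
  refine ⟨μ, hμ, ?_⟩
  have hdu' : ((TG k s t).degree u : ℝ) ≤ tt := by exact_mod_cast hdu
  have hdw' : ((TG k s t).degree w : ℝ) + 1 ≤ s 0 + tt := by exact_mod_cast hdw
  have hdw0 : (0 : ℝ) < (TG k s t).degree w := by exact_mod_cast hdeg w
  have hs' : (1 : ℝ) ≤ s 0 := by exact_mod_cast hs
  rw [le_div_iff₀ (by linarith)]
  nlinarith

end ThresholdGraph

/-- For a connected threshold graph on `n` vertices with string
`0^{s₁}1^{t₁}⋯0^{s_k}1^{t_k}`, the smallest eigenvalue `λ₁` of the normalized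
adjacency matrix satisfies `-(n - t_k)/(n - 1) ≤ λ₁ ≤ -1/(t + s₁ - 1)`. -/
theorem threshold_smallest_eigenvalue_bounds (k : ℕ) (s t : ℕ → ℕ) (hk : 1 ≤ k)
    (hs : ∀ i < k, 1 ≤ s i) (ht : ∀ i < k, 1 ≤ t i) :
    let n := cum s t k
    let tt := ∑ i ∈ Finset.range k, t i
    let M := NA (TG k s t)
    ∃ lam1 : ℝ,
      (∃ v : Fin n → ℝ, v ≠ 0 ∧ M.mulVec v = lam1 • v) ∧
      (∀ μ : ℝ, (∃ v : Fin n → ℝ, v ≠ 0 ∧ M.mulVec v = μ • v) → lam1 ≤ μ) ∧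
      -(((n : ℝ) - t (k - 1)) / ((n : ℝ) - 1)) ≤ lam1 ∧
      lam1 ≤ -1 / ((tt : ℝ) + (s 0 : ℝ) - 1) := by
  intro n tt M
  have hlast : k - 1 < k := by omega
  obtain ⟨μ, hμ, hμle⟩ := TG_exists_mem_spectrum_le hk (hs 0 hk) (ht 0 hk)
    (TG_degree_pos hk (hs _ hlast) (ht _ hlast))
  obtain ⟨lam1, hlam1, hmin⟩ := Set.exists_min_image _ id (finite_spectrum M) ⟨μ, hμ⟩
  simp only [← mem_spectrum_iff_exists_mulVec_eq_smul]
  exact ⟨lam1, hlam1, hmin, TG_neg_div_le_of_mem_spectrum hk (hs _ hlast) (ht _ hlast) hlam1,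
    (hmin μ hμ).trans hμle⟩
end

section
/- Let Γ be the pineapple graph on n vertices with t ≥ 3 clique vertices, i.e., the threshold graph with string 01^{t−1}0^{n−t−1}1. The eigenvalues of the normalized adjacency matrix are 1, 0 with multiplicity n−t−2, −1/t with multiplicity t−1, and the two roots (1/(2t))[−1 ± √(1 + 4t(t−1)(n−t−1)/(n−1))]. -/
open Matrix Polynomial BigOperators Finset

/-!
Vertices `0, …, t-1` are pairwise adjacent twins and the pendant vertices `t, …, n-2` are pairwise
non-adjacent twins. For twins `u, w` the vector `e_u - e_w` is an eigenvector of `D⁻¹A`, with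
eigenvalue `-1/deg u` if they are adjacent and `0` otherwise. Replacing `e_j`, for every `j` other
than the class representatives `0, t, n-1`, by `e_j - e_r` with `r` the representative of its class
is conjugation by `1 - E` with `E² = 0`. It makes `D⁻¹A` block triangular, with these eigenvalues on
the diagonal and a `3 × 3` block that sums the rows of each class `{0, …, t-1}, {t, …, n-2}, {n-1}`
at the columns of the representatives; that block has characteristic polynomial
`(X - 1) (X² + X/t - (t-1)(n-t-1)/(t(n-1)))`.
-/

namespace Matrix

variable {ι κ R : Type*} [Fintype ι] [DecidableEq ι] [Fintype κ] [DecidableEq κ] [CommRing R]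

theorem charpoly_eq_prod_mul_charpoly_submatrix (T : Matrix ι ι R) {v : κ → ι}
    (hv : Function.Injective v) (μ : ι → R)
    (hT : ∀ j ∉ Set.range v, ∀ i, T i j = if i = j then μ j else 0) :
    T.charpoly = (∏ j ∈ (Set.range v).toFinsetᶜ, (X - C (μ j))) * (T.submatrix v v).charpoly := by
  have hblock : ∀ i ∈ Set.range v, ∀ j ∉ Set.range v, T.charmatrix i j = 0 := by
    intro i hi j hj
    rw [charmatrix_apply_ne _ _ _ (ne_of_mem_of_not_mem hi hj), hT j hj,
      if_neg (ne_of_mem_of_not_mem hi hj), map_zero, neg_zero]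
  rw [charpoly, twoBlockTriangular_det' _ _ hblock, mul_comm]
  congr 1
  · have hdiag : toSquareBlockProp T.charmatrix (· ∉ Set.range v) =
        diagonal fun j : {j // j ∉ Set.range v} => X - C (μ j) := by
      ext i j : 1
      by_cases h : i = j
      · simp [h, toSquareBlockProp_def, charmatrix_apply, hT j j.2]
      · have h' : (i : ι) ≠ j := fun e => h (Subtype.ext e)
        simp [h, h', toSquareBlockProp_def, charmatrix_apply, hT j j.2]
    rw [hdiag, det_diagonal]
    exact (Finset.prod_subtype _ (fun j => by simp) (fun j => X - C (μ j))).symm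
  · rw [← charpoly_reindex (Equiv.ofInjective v hv), charpoly, charmatrix_reindex]
    have hsub : T.charmatrix.toSquareBlockProp (· ∈ Set.range v) =
        reindex (Equiv.ofInjective v hv) (Equiv.ofInjective v hv) (T.submatrix v v).charmatrix := by
      ext ⟨_, a, rfl⟩ ⟨_, b, rfl⟩ : 1
      simp [toSquareBlockProp_def, charmatrix_apply, diagonal_apply, hv.eq_iff]
    -- `convert` reconciles the two `Fintype` instances on the subtype `Set.range v`
    convert congrArg det hsub

def fiberRowSum (M : Matrix ι ι R) (c : ι → κ) (v : κ → ι) : Matrix κ κ R :=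
  of fun k l => ∑ j with c j = k, M j (v l)

theorem charpoly_eq_prod_mul_charpoly_fiberRowSum (M : Matrix ι ι R) {c : ι → κ} {v : κ → ι}
    (hcv : ∀ k, c (v k) = k) (μ : ι → R)
    (hM : ∀ j ∉ Set.range v, M *ᵥ (Pi.single j 1 - Pi.single (v (c j)) 1) =
      μ j • (Pi.single j 1 - Pi.single (v (c j)) 1)) :
    M.charpoly = (∏ j ∈ (Set.range v).toFinsetᶜ, (X - C (μ j))) * (fiberRowSum M c v).charpoly := by
  classical
  have hv : Function.Injective v := Function.LeftInverse.injective hcv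
  set E : Matrix ι ι R := of fun i j => if j ∉ Set.range v ∧ i = v (c j) then 1 else 0
  have hE : E * E = 0 := by
    ext i j
    rw [mul_apply, zero_apply]
    refine sum_eq_zero fun k _ => ?_
    simp only [E, of_apply]
    split_ifs <;> simp_all
  have hPQ : (1 + E) * (1 - E) = 1 := by
    rw [add_mul, one_mul, mul_sub, mul_one, hE, sub_zero, sub_add_cancel]
  have hQP : (1 - E) * (1 + E) = 1 := by
    rw [sub_mul, one_mul, mul_add, mul_one, hE, add_zero, add_sub_cancel_right]
  have hQ_col : ∀ j ∉ Set.range v,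
      (1 - E) *ᵥ Pi.single j 1 = Pi.single j 1 - Pi.single (v (c j)) 1 := by
    intro j hj
    have hj' : ∀ x, ¬j = v x := fun x h => hj ⟨x, h.symm⟩
    ext i
    simp [E, one_apply, Pi.single_apply, hj', eq_comm]
  have hQ_range : ∀ j l, (1 - E) j (v l) = if j = v l then 1 else 0 := by
    simp [E, one_apply]
  have hP_row : ∀ k j, (1 + E) (v k) j = if c j = k then 1 else 0 := by
    intro k j
    by_cases hj : j ∈ Set.range v
    · obtain ⟨m, rfl⟩ := hj
      simp [E, one_apply, hv.eq_iff, hcv, eq_comm]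
    · have hj' : ∀ x, ¬j = v x := fun x h => hj ⟨x, h.symm⟩
      simp [E, hv.eq_iff, hj', eq_comm]
  have hconj : M.charpoly = ((1 + E) * M * (1 - E)).charpoly := by
    rw [charpoly_mul_comm, ← mul_assoc, hQP, one_mul]
  rw [hconj, charpoly_eq_prod_mul_charpoly_submatrix _ hv μ]
  · congr 2
    ext k l
    simp only [submatrix_apply, mul_apply, fiberRowSum, of_apply, sum_filter, hQ_range, mul_ite,
      mul_one, mul_zero, sum_ite_eq', mem_univ, if_true, hP_row, ite_mul, one_mul, zero_mul]
  · intro j hj i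
    calc ((1 + E) * M * (1 - E)) i j = (((1 + E) * M * (1 - E)) *ᵥ Pi.single j 1) i := by
          rw [mulVec_single_one]; rfl
      _ = (μ j • Pi.single j 1 : ι → R) i := by
          rw [← mulVec_mulVec, ← mulVec_mulVec, hQ_col j hj, hM j hj, mulVec_smul, ← hQ_col j hj,
            mulVec_mulVec, hPQ, one_mulVec]
      _ = if i = j then μ j else 0 := by simp [Pi.single_apply]

theorem charpoly_fin_three (A : Matrix (Fin 3) (Fin 3) R) :
    A.charpoly = X ^ 3 - C A.trace * X ^ 2 +
      C (A 0 0 * A 1 1 - A 0 1 * A 1 0 + A 0 0 * A 2 2 - A 0 2 * A 2 0 + A 1 1 * A 2 2 -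
        A 1 2 * A 2 1) * X - C A.det := by
  simp only [charpoly, det_fin_three, trace_fin_three, charmatrix_apply, diagonal_apply]
  simp only [↓reduceIte, Fin.isValue, Fin.reduceEq, zero_sub, mul_neg, neg_mul, neg_neg,
    zero_ne_one, one_ne_zero, map_add, map_sub, map_mul]
  ring

end Matrix

theorem Polynomial.X_sub_C_mul_X_sub_C_mul_X_sub_C {R : Type*} [CommRing R] (x y z : R) :
    (X - C x) * (X - C y) * (X - C z) =
      X ^ 3 - C (x + y + z) * X ^ 2 + C (x * y + x * z + y * z) * X - C (x * y * z) := by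
  simp only [map_add, map_mul]
  ring

theorem SimpleGraph.degree_eq_of_adj_iff_adj {V : Type*} [Fintype V] [DecidableEq V]
    (G : SimpleGraph V) [DecidableRel G.Adj] {u w : V}
    (htwin : ∀ x, x ≠ u → x ≠ w → (G.Adj x u ↔ G.Adj x w)) : G.degree u = G.degree w := by
  rw [← card_neighborFinset_eq_degree, ← card_neighborFinset_eq_degree]
  have hswap : (G.neighborFinset u).map (Equiv.swap u w).toEmbedding = G.neighborFinset w := by
    ext x
    rw [Finset.mem_map_equiv, mem_neighborFinset, mem_neighborFinset, Equiv.symm_swap,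
      Equiv.swap_apply_def]
    split_ifs with hxu hxw
    · subst hxu; exact G.adj_comm _ _
    · subst hxw; simp
    · rw [G.adj_comm, htwin x hxu hxw, G.adj_comm]
  rw [← hswap, Finset.card_map]

theorem NA_mulVec_single_sub_single {n : ℕ} (G : SimpleGraph (Fin n)) [DecidableRel G.Adj]
    {u w : Fin n} (htwin : ∀ x, x ≠ u → x ≠ w → (G.Adj x u ↔ G.Adj x w)) :
    NA G *ᵥ (Pi.single u 1 - Pi.single w 1) =
      (-G.adjMatrix ℝ u w / G.degree u) • (Pi.single u 1 - Pi.single w 1) := by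
  ext x
  rw [NA, ← mulVec_mulVec, mulVec_diagonal, mulVec_sub, mulVec_single_one, mulVec_single_one]
  by_cases huw : u = w
  · subst huw
    simp
  by_cases hxu : x = u
  · subst hxu
    by_cases hadj : G.Adj x w <;> simp [huw, hadj, div_eq_inv_mul]
  by_cases hxw : x = w
  · subst hxw
    by_cases hadj : G.Adj u x <;>
      simp [hxu, hadj, G.adj_comm x u, G.degree_eq_of_adj_iff_adj htwin, div_eq_inv_mul]
  · simp [hxu, hxw, htwin x hxu hxw]

theorem fiberRowSum_NA_apply {n : ℕ} (G : SimpleGraph (Fin n)) [DecidableRel G.Adj] {κ : Type*}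
    [Fintype κ] [DecidableEq κ] {c : Fin n → κ} {d : κ → ℕ} (hd : ∀ j, G.degree j = d (c j))
    (v : κ → Fin n) (k l : κ) :
    Matrix.fiberRowSum (NA G) c v k l = #{j | c j = k ∧ G.Adj j (v l)} / d k := by
  have hfiber : ∀ j ∈ ({j | c j = k} : Finset (Fin n)),
      NA G j (v l) = (d k : ℝ)⁻¹ * if G.Adj j (v l) then 1 else 0 := by
    intro j hj
    rw [NA, diagonal_mul, SimpleGraph.adjMatrix_apply, hd j, (mem_filter.mp hj).2]
  rw [Matrix.fiberRowSum, Matrix.of_apply, sum_congr rfl hfiber, ← mul_sum, sum_boole,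
    filter_filter, inv_mul_eq_div]

theorem Fin.card_eq_card_of_mem_iff_val_mem {n : ℕ} {S : Finset (Fin n)} {s : Finset ℕ}
    (hs : ∀ m ∈ s, m < n) (h : ∀ j : Fin n, j ∈ S ↔ j.val ∈ s) : #S = #s := by
  rw [← card_attachFin s hs]
  congr 1
  ext j
  simp [h]

theorem Fin.card_filter_eq_sub_of_iff {n a b : ℕ} (hb : b ≤ n) {p : Fin n → Prop}
    [DecidablePred p] (h : ∀ j : Fin n, p j ↔ a ≤ j.val ∧ j.val < b) : #{j | p j} = b - a := by
  rw [card_eq_card_of_mem_iff_val_mem (s := Ico a b) (fun m hm => by simp at hm; omega)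
    (fun j => by simp [h]), Nat.card_Ico]

abbrev pineapple (n t : ℕ) : SimpleGraph (Fin n) :=
  thresholdGraph n fun p => decide ((1 ≤ p.val ∧ p.val < t) ∨ p.val = n - 1)

def pineappleClass (n t : ℕ) (j : Fin n) : Fin 3 :=
  if j.val < t then 0 else if j.val < n - 1 then 1 else 2

def pineappleRep {n t : ℕ} (hn : t + 2 ≤ n) : Fin 3 → Fin n :=
  ![⟨0, by omega⟩, ⟨t, by omega⟩, ⟨n - 1, by omega⟩]

section Pineapple

variable {n t : ℕ}

theorem pineapple_adj {i j : Fin n} :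
    (pineapple n t).Adj i j ↔
      i ≠ j ∧ ((i.val < t ∧ j.val < t) ∨ i.val = n - 1 ∨ j.val = n - 1) := by
  simp only [pineapple, thresholdGraph, decide_eq_true_eq, Fin.coe_max, ne_eq, Fin.ext_iff]
  omega

theorem pineappleClass_eq_zero {j : Fin n} : pineappleClass n t j = 0 ↔ j.val < t := by
  unfold pineappleClass
  split_ifs <;> simp_all

theorem pineappleClass_eq_one {j : Fin n} :
    pineappleClass n t j = 1 ↔ t ≤ j.val ∧ j.val < n - 1 := by
  unfold pineappleClass
  split_ifs <;> simp_all

theorem pineappleClass_eq_two {j : Fin n} :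
    pineappleClass n t j = 2 ↔ t ≤ j.val ∧ n - 1 ≤ j.val := by
  unfold pineappleClass
  split_ifs <;> simp_all
  omega

theorem pineappleClass_rep (ht : 0 < t) (hn : t + 2 ≤ n) (k : Fin 3) :
    pineappleClass n t (pineappleRep hn k) = k := by
  have : t < n - 1 := by omega
  fin_cases k <;> simp [pineappleClass, pineappleRep, ht.ne', this, this.le]

theorem mem_range_pineappleRep (hn : t + 2 ≤ n) (j : Fin n) :
    j ∈ Set.range (pineappleRep hn) ↔ j.val = 0 ∨ j.val = t ∨ j.val = n - 1 := by
  simp only [pineappleRep, range_cons, range_empty, Set.union_empty, Set.union_singleton,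
    Set.union_insert, Set.mem_insert_iff, Fin.ext_iff, eq_comm, Set.mem_singleton_iff]
  omega

theorem pineapple_degree (htn : t < n) (j : Fin n) :
    (pineapple n t).degree j = ![t, 1, n - 1] (pineappleClass n t j) := by
  rw [← SimpleGraph.card_neighborFinset_eq_degree, SimpleGraph.neighborFinset_eq_filter]
  by_cases hjt : j.val < t
  · rw [Fin.card_eq_card_of_mem_iff_val_mem (s := insert (n - 1) ((range t).erase j))
      (fun m hm => by simp at hm; omega)]
    · rw [card_insert_of_notMem (by simp; omega), card_erase_of_mem (by simp; omega), card_range]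
      simp only [Nat.succ_eq_add_one, Nat.reduceAdd, pineappleClass, hjt, ↓reduceIte, Fin.isValue,
        cons_val_zero]
      omega
    · intro i
      simp only [pineapple_adj, ne_eq, Fin.ext_iff, mem_filter, mem_univ, true_and, mem_insert,
        mem_erase, mem_range]
      omega
  by_cases hjn : j.val < n - 1
  · rw [Fin.card_eq_card_of_mem_iff_val_mem (s := {n - 1}) (fun m hm => by simp at hm; omega)]
    · simp [pineappleClass, hjt, hjn]
    · intro i
      simp only [pineapple_adj, ne_eq, Fin.ext_iff, mem_filter, mem_univ, true_and, mem_singleton]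
      omega
  · rw [Fin.card_eq_card_of_mem_iff_val_mem (s := range (n - 1))
      (fun m hm => by simp at hm; omega)]
    · simp [pineappleClass, hjt, hjn]
    · intro i
      simp only [pineapple_adj, ne_eq, Fin.ext_iff, mem_filter, mem_univ, true_and, mem_range]
      omega

theorem NA_pineapple_mulVec (hn : t + 2 ≤ n) {j : Fin n}
    (hj : j ∉ Set.range (pineappleRep hn)) :
    NA (pineapple n t) *ᵥ
        (Pi.single j 1 - Pi.single (pineappleRep hn (pineappleClass n t j)) 1) =
      (if j.val < t then -1 / (t : ℝ) else 0) •
        (Pi.single j 1 - Pi.single (pineappleRep hn (pineappleClass n t j)) 1) := by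
  set w := pineappleRep hn (pineappleClass n t j)
  rw [mem_range_pineappleRep] at hj
  have hw : w.val = if j.val < t then 0 else t := by
    by_cases hjt : j.val < t
    · simp [w, pineappleClass, pineappleRep, hjt]
    · have : j.val < n - 1 := by omega
      simp [w, pineappleClass, pineappleRep, hjt, this]
  rw [NA_mulVec_single_sub_single _ (fun x hxj hxw => by
      rw [ne_eq, Fin.ext_iff] at hxj hxw
      simp only [pineapple_adj, ne_eq, Fin.ext_iff]
      split_ifs at hw <;> omega),
    pineapple_degree (by omega), SimpleGraph.adjMatrix_apply]
  congr 1
  by_cases hjt : j.val < t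
  · have hadj : (pineapple n t).Adj j w := by
      rw [pineapple_adj, ne_eq, Fin.ext_iff]
      simp only [hjt, if_true] at hw
      omega
    simp [hadj, hjt, pineappleClass]
  · have hadj : ¬(pineapple n t).Adj j w := by
      rw [pineapple_adj, ne_eq, Fin.ext_iff]
      simp only [hjt, if_false] at hw
      omega
    simp [hadj, hjt]

theorem prod_pineapple_twin_eigenvalues (hn : t + 2 ≤ n) :
    ∏ j ∈ (Set.range (pineappleRep hn)).toFinsetᶜ,
        (X - C (if j.val < t then -1 / (t : ℝ) else 0)) =
      (X - C (-1 / (t : ℝ))) ^ (t - 1) * X ^ (n - t - 2) := by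
  rw [← prod_filter_mul_prod_filter_not _ (fun j : Fin n => j.val < t)]
  congr 1
  · rw [prod_congr rfl fun j hj => by rw [if_pos (mem_filter.mp hj).2], prod_const,
      Fin.card_eq_card_of_mem_iff_val_mem (s := Ico 1 t) (fun m hm => by simp at hm; omega),
      Nat.card_Ico]
    intro j
    simp only [mem_filter, mem_compl, Set.mem_toFinset, mem_range_pineappleRep, mem_Ico]
    omega
  · rw [prod_congr rfl fun j hj => by rw [if_neg (mem_filter.mp hj).2], prod_const,
      Fin.card_eq_card_of_mem_iff_val_mem (s := Ico (t + 1) (n - 1))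
        (fun m hm => by simp at hm; omega),
      Nat.card_Ico, map_zero, sub_zero]
    · congr 1
      omega
    intro j
    simp only [mem_filter, mem_compl, Set.mem_toFinset, mem_range_pineappleRep, mem_Ico]
    omega

theorem pineapple_fiber_adj_iff (hn : t + 2 ≤ n) (k l : Fin 3) (j : Fin n) :
    pineappleClass n t j = k ∧ (pineapple n t).Adj j (pineappleRep hn l) ↔
      !![1, 0, 0; 0, 0, t; n - 1, n - 1, 0] k l ≤ j.val ∧
        j.val < !![t, 0, t; 0, 0, n - 1; n, n, 0] k l := by
  fin_cases k <;> fin_cases l <;>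
    simp only [Fin.zero_eta, Fin.mk_one, Fin.reduceFinMk, Fin.isValue, pineappleClass_eq_zero,
      pineappleClass_eq_one, pineappleClass_eq_two, pineapple_adj] <;>
    simp [pineappleRep, Fin.ext_iff] <;> omega

theorem fiberRowSum_NA_pineapple (ht : 0 < t) (hn : t + 2 ≤ n) :
    Matrix.fiberRowSum (NA (pineapple n t)) (pineappleClass n t) (pineappleRep hn) =
      !![((t : ℝ) - 1) / t, 0, 1; 0, 0, (n : ℝ) - t - 1; 1 / ((n : ℝ) - 1), 1 / ((n : ℝ) - 1), 0] := by
  ext k l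
  rw [fiberRowSum_NA_apply _ (pineapple_degree (by omega)),
    Fin.card_filter_eq_sub_of_iff (by fin_cases k <;> fin_cases l <;> simp <;> omega)
      (pineapple_fiber_adj_iff hn k l)]
  have h1t : 1 ≤ t := ht
  have h1n : 1 ≤ n := by omega
  have htn : t ≤ n - 1 := by omega
  fin_cases k <;> fin_cases l <;> simp [Nat.cast_sub, h1t, h1n, htn, ht.ne']
  ring

end Pineapple

theorem charpoly_pineapple_quotient {t n : ℝ} (ht : 1 ≤ t) (htn : t + 1 ≤ n) :
    let s := √(1 + 4 * t * (t - 1) * (n - t - 1) / (n - 1))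
    (!![(t - 1) / t, 0, 1; 0, 0, n - t - 1; 1 / (n - 1), 1 / (n - 1), 0]).charpoly =
      (X - C 1) * (X - C (1 / (2 * t) * (-1 + s))) * (X - C (1 / (2 * t) * (-1 - s))) := by
  intro s
  have hn1 : 0 < n - 1 := by linarith
  have hs : s ^ 2 = 1 + 4 * t * (t - 1) * (n - t - 1) / (n - 1) :=
    Real.sq_sqrt (add_nonneg zero_le_one (div_nonneg (mul_nonneg (mul_nonneg (by linarith)
      (by linarith)) (by linarith)) hn1.le))
  have hs' : (n - 1) * s ^ 2 = n - 1 + 4 * t * (t - 1) * (n - t - 1) := by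
    rw [hs]
    field_simp
  rw [Matrix.charpoly_fin_three, X_sub_C_mul_X_sub_C_mul_X_sub_C]
  congr 4
  · congr 1
    simp only [one_div, trace_fin_three, Fin.isValue, of_apply, cons_val', cons_val_zero,
      cons_val_fin_one, cons_val_one, add_zero, Matrix.cons_val, _root_.mul_inv_rev]
    field_simp
    ring
  · simp only [one_div, Fin.isValue, of_apply, cons_val', cons_val_zero, cons_val_fin_one,
      cons_val_one, mul_zero, sub_self, Matrix.cons_val, add_zero, one_mul, zero_sub,
      _root_.mul_inv_rev]
    field_simp
    linear_combination hs'
  · simp only [one_div, det_fin_three, Fin.isValue, of_apply, cons_val', cons_val_zero,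
      cons_val_fin_one, cons_val_one, mul_zero, Matrix.cons_val, zero_sub, sub_zero, zero_mul,
      add_zero, _root_.mul_inv_rev, one_mul]
    field_simp
    linear_combination hs'

/-- The pineapple graph on `n` vertices with `t ≥ 3` clique
vertices (threshold string `0 1^{t-1} 0^{n-t-1} 1`) has normalized adjacency
eigenvalues `1`, `0` with multiplicity `n-t-2`, `-1/t` with multiplicity
`t-1`, and the two roots `(1/(2t))[-1 ± √(1 + 4t(t-1)(n-t-1)/(n-1))]`. -/
theorem pineapple_spectrum (n t : ℕ) (ht : 3 ≤ t) (hn : t + 2 ≤ n) :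
    let G := thresholdGraph n
      (fun p => decide ((1 ≤ p.val ∧ p.val < t) ∨ p.val = n - 1))
    (NA G).charpoly.roots =
      {(1 : ℝ)} + Multiset.replicate (n - t - 2) (0 : ℝ) +
        Multiset.replicate (t - 1) (-1 / (t : ℝ)) +
        {(1 / (2 * (t : ℝ))) *
            (-1 + Real.sqrt (1 + 4 * t * ((t : ℝ) - 1) * ((n : ℝ) - t - 1) / ((n : ℝ) - 1))),
          (1 / (2 * (t : ℝ))) *
            (-1 - Real.sqrt (1 + 4 * t * ((t : ℝ) - 1) * ((n : ℝ) - t - 1) / ((n : ℝ) - 1)))} := by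
  intro G
  refine (congrArg roots ?_).trans (roots_multiset_prod_X_sub_C _)
  rw [charpoly_eq_prod_mul_charpoly_fiberRowSum (NA (pineapple n t))
      (pineappleClass_rep (by omega) hn) _ (fun j hj => NA_pineapple_mulVec hn hj),
    prod_pineapple_twin_eigenvalues hn, fiberRowSum_NA_pineapple (by omega) hn,
    charpoly_pineapple_quotient (by exact_mod_cast (by omega : 1 ≤ t))
      (by exact_mod_cast (by omega : t + 1 ≤ n))]
  simp only [Multiset.map_add, Multiset.prod_add, Multiset.map_replicate, Multiset.prod_replicate,
    Multiset.map_singleton, Multiset.prod_singleton, Multiset.insert_eq_cons, Multiset.map_cons,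
    Multiset.prod_cons, map_zero, sub_zero]
  ring
end
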